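/- Suppose f is a transduction that is invariant under permutations, is without data peeking, has linear blow up, and is such that ≡_f has finitely many equivalence classes. If E is an equalizing scheme for f, then ≡_f^E has finitely many equivalence classes. -/

import Mathlib

namespace SSRT

/-- Elements of a factored output: either a retained output triple
(letter, data value, origin — integer origins allow shifting by `z`),
or one of the placeholder marks `(*,*,left)`, `(*,*,middle)`, `(*,*,right)`. -/
inductive FOElem (G D : Type) where
  | tri (g : G) (d : D) (o : ℤ)
  | left
  | middle
  | right
  deriving DecidableEq

namespace FOElem

def isTri {G D : Type} : FOElem G D → Bool
  | .tri _ _ _ => true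
  | _ => false

def isMark {G D : Type} (e : FOElem G D) : Bool := !e.isTri

end FOElem

/-- Data words over the input alphabet `A` with data from `D`. -/
abbrev DataWord (A D : Type) := List (A × D)

/-- Data words with origin information over the output alphabet `G`;
positions of the input are numbered 1,…,n. -/
abbrev OutWord (G D : Type) := List (G × D × ℕ)

/-- A transduction. -/
abbrev Transduction (A G D : Type) := DataWord A D → OutWord G D

variable {A G D : Type}

/-- Apply a permutation of data values to a data word. -/
def permW (π : Equiv.Perm D) (u : DataWord A D) : DataWord A D :=
  u.map fun p => (p.1, π p.2)

/-- Apply a permutation of data values to an output word. -/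
def permOut (π : Equiv.Perm D) (w : OutWord G D) : OutWord G D :=
  w.map fun t => (t.1, π t.2.1, t.2.2)

/-- Apply a permutation of data values to a factored output
(placeholder marks are unchanged). -/
def permFO (π : Equiv.Perm D) : List (FOElem G D) → List (FOElem G D) :=
  List.map fun e => match e with
    | .tri g d o => .tri g (π d) o
    | .left => .left
    | .middle => .middle
    | .right => .right

/-- Shift the origin of every retained triple by `z`. -/
def foShift (z : ℤ) : List (FOElem G D) → List (FOElem G D) :=
  List.map fun e => match e with
    | .tri g d o => .tri g d (o + z)
    | .left => .left
    | .middle => .middle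
    | .right => .right

/-- `f` is invariant under permutations. -/
def PermInvariant (f : Transduction A G D) : Prop :=
  ∀ (π : Equiv.Perm D) (u : DataWord A D), f (permW π u) = permOut π (f u)

/-- `f` is without data peeking: every data value output from origin `o`
already occurs in the input at some position `≤ o`. -/
def NoDataPeeking (f : Transduction A G D) : Prop :=
  ∀ (w : DataWord A D) (t : G × D × ℕ), t ∈ f w →
    ∃ (i : ℕ) (a : A), w[i]? = some (a, t.2.1) ∧ i + 1 ≤ t.2.2

/-- `f` has linear blow up. -/
def LinearBlowUp (f : Transduction A G D) : Prop :=
  ∃ K : ℕ, ∀ (w : DataWord A D) (o : ℕ), 1 ≤ o → o ≤ w.length →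
    ((f w).filter fun t => t.2.2 == o).length ≤ K

variable [DecidableEq G] [DecidableEq D]

/-- Merge consecutive occurrences of equal placeholder marks into one. -/
def collapse : List (FOElem G D) → List (FOElem G D)
  | [] => []
  | [a] => [a]
  | a :: b :: rest =>
      if a = b ∧ a.isMark then collapse (b :: rest)
      else a :: collapse (b :: rest)

/-- The factored output `f(u̲ ∣ v)`. -/
def leftFac (f : Transduction A G D) (u v : DataWord A D) : List (FOElem G D) :=
  collapse ((f (u ++ v)).map fun t =>
    if t.2.2 ≤ u.length then FOElem.left else FOElem.tri t.1 t.2.1 (t.2.2 : ℤ))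

/-- The factored output `f(u ∣ v̲)`. -/
def rightFac (f : Transduction A G D) (u v : DataWord A D) : List (FOElem G D) :=
  collapse ((f (u ++ v)).map fun t =>
    if u.length < t.2.2 then FOElem.right else FOElem.tri t.1 t.2.1 (t.2.2 : ℤ))

/-- The factored output `f(u̲ ∣ v ∣ w̲)`. -/
def threeFac (f : Transduction A G D) (u v w : DataWord A D) : List (FOElem G D) :=
  collapse ((f (u ++ v ++ w)).map fun t =>
    if t.2.2 ≤ u.length then FOElem.left
    else if t.2.2 ≤ u.length + v.length then FOElem.tri t.1 t.2.1 (t.2.2 : ℤ)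
    else FOElem.right)

/-- The factored output `f(u̲ ∣ v̲ ∣ w̲)`. -/
def allFac (f : Transduction A G D) (u v w : DataWord A D) : List (FOElem G D) :=
  collapse ((f (u ++ v ++ w)).map fun t =>
    if t.2.2 ≤ u.length then FOElem.left
    else if t.2.2 ≤ u.length + v.length then FOElem.middle
    else FOElem.right)

/-- `u[d/d']`: replace every occurrence of the data value `d` by `d'`. -/
def replaceD (u : DataWord A D) (d d' : D) : DataWord A D :=
  u.map fun p => (p.1, if p.2 = d then d' else p.2)

/-- Isomorphism of data words: same length, same letters, and the same
equalities among the data values at the various positions. -/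
def Iso (u u' : DataWord A D) : Prop :=
  u.length = u'.length ∧
  (∀ i : ℕ, u[i]?.map Prod.fst = u'[i]?.map Prod.fst) ∧
  (∀ i j : ℕ, (u[i]?.map Prod.snd = u[j]?.map Prod.snd) ↔
          (u'[i]?.map Prod.snd = u'[j]?.map Prod.snd))

/-- `d'` is a safe replacement for `d` in `u`. -/
def SafeRepl (d d' : D) (u : DataWord A D) : Prop := Iso (replaceD u d d') u

def OccursIn (d : D) (u : DataWord A D) : Prop := ∃ p ∈ u, p.2 = d

/-- `d` is `f`-memorable in `u`. -/
def Memorable (f : Transduction A G D) (d : D) (u : DataWord A D) : Prop :=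
  ∃ (v : DataWord A D) (d' : D), SafeRepl d d' u ∧
    leftFac f (replaceD u d d') v ≠ leftFac f u v

/-- `d` is `f`-vulnerable in `u`. -/
def Vulnerable (f : Transduction A G D) (d : D) (u : DataWord A D) : Prop :=
  ∃ (u' v : DataWord A D) (d' : D), ¬ OccursIn d u' ∧
    SafeRepl d d' (u ++ u' ++ v) ∧
    rightFac f (u ++ u') (replaceD v d d') ≠ rightFac f (u ++ u') v

/-- `d` is `f`-influencing in `u`. -/
def Influencing (f : Transduction A G D) (d : D) (u : DataWord A D) : Prop :=
  Memorable f d u ∨ Vulnerable f d u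

/-- The last occurrence of `d` in `u` is at (0-based) index `i`. -/
def IsLastOcc (u : DataWord A D) (d : D) (i : ℕ) : Prop :=
  (∃ a : A, u[i]? = some (a, d)) ∧ ∀ j : ℕ, i < j → ∀ p : A × D, u[j]? = some p → p.2 ≠ d

/-- `d` is fresher than `e` in `u`: the last occurrence of `d` in `u` is
strictly to the right of the last occurrence of `e`. -/
def Fresher (u : DataWord A D) (d e : D) : Prop :=
  ∃ i j : ℕ, IsLastOcc u d i ∧ IsLastOcc u e j ∧ j < i

/-- `l` is the sequence of all `f`-influencing values of `u`, listed freshest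
first: the `i`-th element (1-based) is the `i`-th `f`-influencing value of `u`.
(The paper writes this sequence in the reverse direction, as `d_m ⋯ d_1`.) -/
def IsIflSeq (f : Transduction A G D) (u : DataWord A D) (l : List D) : Prop :=
  (∀ d, d ∈ l ↔ Influencing f d u) ∧ l.Nodup ∧
  ∀ (i j : ℕ) (hi : i < l.length) (hj : j < l.length), i < j →
    Fresher u (l.get ⟨i, hi⟩) (l.get ⟨j, hj⟩)

/-- The type annotation of an influencing value. -/
inductive IflType where
  | vm | m | v
  deriving DecidableEq

def HasIflType (f : Transduction A G D) (u : DataWord A D) (d : D) :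
    IflType → Prop
  | .vm => Memorable f d u ∧ Vulnerable f d u
  | .m => Memorable f d u ∧ ¬ Vulnerable f d u
  | .v => Vulnerable f d u ∧ ¬ Memorable f d u

/-- `al` is `aifl_f(u)` (listed freshest first). -/
def IsAiflSeq (f : Transduction A G D) (u : DataWord A D)
    (al : List (D × IflType)) : Prop :=
  IsIflSeq f u (al.map Prod.fst) ∧ ∀ p ∈ al, HasIflType f u p.1 p.2

/-- The equivalence `u1 ≡_f u2`. -/
def FEquiv (f : Transduction A G D) (u1 u2 : DataWord A D) : Prop :=
  ∃ π : Equiv.Perm D,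
    (∀ v, foShift ((u1.length : ℤ) - (u2.length : ℤ))
        (leftFac f (permW π u2) v) = leftFac f u1 v) ∧
    (∀ al, IsAiflSeq f (permW π u2) al ↔ IsAiflSeq f u1 al) ∧
    (∀ u v1 v2, (rightFac f (u1 ++ u) v1 = rightFac f (u1 ++ u) v2) ↔
        (rightFac f (permW π u2 ++ u) v1 = rightFac f (permW π u2 ++ u) v2))

/-- `≡_f` has finitely many equivalence classes. -/
def FEquivFiniteIndex (f : Transduction A G D) : Prop :=
  ∃ S : Set (DataWord A D), S.Finite ∧ ∀ u, ∃ r ∈ S, FEquiv f r u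

/-- `E` is an equalizing scheme for `f` with associated sequence `δ 1, δ 2, ⋯`
(the value `δ 0` is irrelevant here): for every data word `u`, the `i`-th
`f`-influencing value of `E(u)(u)` is `δ i`. -/
def IsEqualizingSchemeWith (f : Transduction A G D)
    (E : DataWord A D → Equiv.Perm D) (δ : ℕ → D) : Prop :=
  ∀ (u : DataWord A D) (l : List D), IsIflSeq f (permW (E u) u) l →
    ∀ (i : ℕ) (h : i < l.length), l.get ⟨i, h⟩ = δ (i + 1)

def IsEqualizingScheme (f : Transduction A G D)
    (E : DataWord A D → Equiv.Perm D) : Prop :=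
  ∃ δ : ℕ → D, IsEqualizingSchemeWith f E δ

/-- `v1 ≡_f^E v2`. -/
def REquiv (f : Transduction A G D) (E : DataWord A D → Equiv.Perm D)
    (v1 v2 : DataWord A D) : Prop :=
  ∀ u, rightFac f (permW (E u) u) v1 = rightFac f (permW (E u) u) v2

/-- `≡_f^E` has finitely many equivalence classes. -/
def REquivFiniteIndex (f : Transduction A G D)
    (E : DataWord A D → Equiv.Perm D) : Prop :=
  ∃ S : Set (DataWord A D), S.Finite ∧ ∀ v, ∃ r ∈ S, REquiv f E r v

/-- The blocks of a factored output: the maximal infixes consisting of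
retained triples, in order. -/
def triBlocks (l : List (FOElem G D)) : List (List (FOElem G D)) :=
  (l.splitOnP fun e => !e.isTri).filter fun b => !b.isEmpty

/-- Helper for concretizing non-right blocks: walk `f(u̲ ∣ v̲ ∣ w̲)` and
substitute the `i`-th occurrence of the left mark by the `i`-th left block
(taken from `L`) and the `j`-th occurrence of the middle mark by the `j`-th
middle block (taken from `M`); right marks are turned into separators. -/
def annotateNR (L M : List (List (FOElem G D))) :
    List (FOElem G D) → ℕ → ℕ → List (Option (List (FOElem G D)))
  | [], _, _ => []
  | .left :: rest, i, j => some (L.getD i []) :: annotateNR L M rest (i + 1) j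
  | .middle :: rest, i, j => some (M.getD j []) :: annotateNR L M rest i (j + 1)
  | .right :: rest, i, j => none :: annotateNR L M rest i j
  | .tri g d o :: rest, i, j => some [.tri g d o] :: annotateNR L M rest i j

/-- The concretizations of the non-right blocks of `f(u̲ ∣ v̲ ∣ w̲)`, in order:
the concretization of a non-right block is the concatenation of the
concretizations of the left blocks (taken from `f(u ∣ v·w̲)`) and the middle
blocks (taken from `f(u̲ ∣ v ∣ w̲)`) occurring in it. -/
def concretizedNRBlocks (f : Transduction A G D) (u v w : DataWord A D) :
    List (List (FOElem G D)) :=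
  (((annotateNR (triBlocks (rightFac f u (v ++ w))) (triBlocks (threeFac f u v w))
        (allFac f u v w) 0 0).splitOnP fun o => o.isNone).filter
      fun grp => !grp.isEmpty).map fun grp => grp.reduceOption.flatten

/-- `π` tracks influencing values (relative to the sequence `δ`) on `w`:
the `i`-th `f`-influencing value of `w` is `π (δ i)`. -/
def TracksInfluencing (f : Transduction A G D) (δ : ℕ → D) (π : Equiv.Perm D)
    (w : DataWord A D) : Prop :=
  ∀ l, IsIflSeq f w l → ∀ (i : ℕ) (h : i < l.length), l.get ⟨i, h⟩ = π (δ (i + 1))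

/-! ### Auxiliary lemmas -/
set_option linter.unusedSectionVars false

section Aux

lemma permW_append (π : Equiv.Perm D) (u v : DataWord A D) :
    permW π (u ++ v) = permW π u ++ permW π v := List.map_append

@[simp] lemma length_permW (π : Equiv.Perm D) (u : DataWord A D) :
    (permW π u).length = u.length := List.length_map _

lemma permW_permW (σ τ : Equiv.Perm D) (u : DataWord A D) :
    permW σ (permW τ u) = permW (σ * τ) u := by
  simp [permW, List.map_map, Function.comp_def]

@[simp] lemma permW_one (u : DataWord A D) : permW 1 u = u := by
  simp [permW]

@[simp] lemma permW_inv_permW (π : Equiv.Perm D) (u : DataWord A D) :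
    permW π⁻¹ (permW π u) = u := by
  rw [permW_permW, inv_mul_cancel, permW_one]

@[simp] lemma permW_permW_inv (π : Equiv.Perm D) (u : DataWord A D) :
    permW π (permW π⁻¹ u) = u := by
  rw [permW_permW, mul_inv_cancel, permW_one]

lemma getElem?_permW (π : Equiv.Perm D) (u : DataWord A D) (i : ℕ) :
    (permW π u)[i]? = Option.map (fun p => (p.1, π p.2)) u[i]? :=
  List.getElem?_map

/-- The element-wise function underlying `permFO`. -/
def permFOfun (π : Equiv.Perm D) : FOElem G D → FOElem G D := fun e =>
  match e with
  | .tri g d o => .tri g (π d) o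
  | .left => .left
  | .middle => .middle
  | .right => .right

lemma permFO_eq_map (π : Equiv.Perm D) (l : List (FOElem G D)) :
    permFO π l = l.map (permFOfun π) := rfl

lemma permFOfun_inj (π : Equiv.Perm D) (a b : FOElem G D) :
    permFOfun π a = permFOfun π b ↔ a = b := by
  cases a <;> cases b <;> simp [permFOfun]

lemma permFOfun_isMark (π : Equiv.Perm D) (a : FOElem G D) :
    (permFOfun π a).isMark = a.isMark := by
  cases a <;> simp [permFOfun, FOElem.isMark, FOElem.isTri]

lemma permFOfun_permFOfun (σ τ : Equiv.Perm D) (a : FOElem G D) :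
    permFOfun σ (permFOfun τ a) = permFOfun (σ * τ) a := by
  cases a <;> simp [permFOfun]

@[simp] lemma permFOfun_one (a : FOElem G D) : permFOfun (1 : Equiv.Perm D) a = a := by
  cases a <;> simp [permFOfun]

lemma permFO_permFO (σ τ : Equiv.Perm D) (l : List (FOElem G D)) :
    permFO σ (permFO τ l) = permFO (σ * τ) l := by
  simp only [permFO_eq_map, List.map_map]
  exact List.map_congr_left fun a _ => permFOfun_permFOfun σ τ a

lemma permFO_inj (π : Equiv.Perm D) {l₁ l₂ : List (FOElem G D)} :
    permFO π l₁ = permFO π l₂ ↔ l₁ = l₂ := by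
  constructor
  · intro h
    have h2 := congrArg (permFO (G := G) π⁻¹) h
    rw [permFO_permFO, permFO_permFO, inv_mul_cancel] at h2
    have hid : ∀ l : List (FOElem G D), permFO (1 : Equiv.Perm D) l = l := by
      intro l
      rw [permFO_eq_map,
        show (permFOfun (1 : Equiv.Perm D) : FOElem G D → FOElem G D) = id from
          funext permFOfun_one]
      exact List.map_id l
    rwa [hid, hid] at h2
  · rintro rfl; rfl

end Aux

section Collapse

variable [DecidableEq G] [DecidableEq D]

lemma collapse_sublist (l : List (FOElem G D)) : List.Sublist (collapse l) l := by
  induction l with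
  | nil => simp [collapse]
  | cons a t ih =>
    cases t with
    | nil => simp [collapse]
    | cons b r =>
      rw [collapse]
      split
      · exact ih.cons a
      · exact ih.cons₂ a

lemma collapse_head (a : FOElem G D) (l : List (FOElem G D)) :
    (collapse (a :: l)).head? = some a := by
  induction l generalizing a with
  | nil => simp [collapse]
  | cons b r ih =>
    rw [collapse]
    split
    · rename_i h; rw [ih b, h.1]
    · rfl

lemma collapse_chain' (l : List (FOElem G D)) :
    List.Chain' (fun a b => ¬(a = b ∧ a.isMark = true)) (collapse l) := by
  induction l with
  | nil => exact List.isChain_nil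
  | cons a t ih =>
    cases t with
    | nil => exact List.isChain_singleton a
    | cons b r =>
      rw [collapse]
      split
      · exact ih
      · rename_i h
        unfold List.Chain'
        rw [List.isChain_cons]
        refine ⟨?_, ih⟩
        intro y hy
        rw [collapse_head] at hy
        cases hy
        exact h

lemma collapse_map (ψ : FOElem G D → FOElem G D)
    (hinj : ∀ a b, ψ a = ψ b ↔ a = b) (hmark : ∀ a, (ψ a).isMark = a.isMark)
    (l : List (FOElem G D)) : collapse (l.map ψ) = (collapse l).map ψ := by
  induction l with
  | nil => simp [collapse]
  | cons a t ih =>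
    cases t with
    | nil => simp [collapse]
    | cons b r =>
      simp only [List.map_cons] at *
      rw [collapse, collapse]
      by_cases h : a = b ∧ a.isMark = true
      · rw [if_pos h, if_pos ⟨(hinj a b).2 h.1, by rw [hmark]; exact h.2⟩, ih]
      · rw [if_neg h, if_neg (by rw [hinj, hmark]; exact h), ih, List.map_cons]

end Collapse

section Equivariance

variable [DecidableEq G] [DecidableEq D]

lemma rightFac_perm {f : Transduction A G D} (hperm : PermInvariant f)
    (π : Equiv.Perm D) (x y : DataWord A D) :
    rightFac f (permW π x) (permW π y) = permFO π (rightFac f x y) := by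
  unfold rightFac
  rw [← permW_append, hperm, permFO_eq_map,
    ← collapse_map (permFOfun π) (permFOfun_inj π) (permFOfun_isMark π)]
  congr 1
  unfold permOut
  rw [List.map_map, List.map_map]
  refine List.map_congr_left fun t ht => ?_
  by_cases h : x.length < t.2.2 <;> simp [permFOfun, h, Function.comp]

lemma leftFac_perm {f : Transduction A G D} (hperm : PermInvariant f)
    (π : Equiv.Perm D) (x y : DataWord A D) :
    leftFac f (permW π x) (permW π y) = permFO π (leftFac f x y) := by
  unfold leftFac
  rw [← permW_append, hperm, permFO_eq_map,
    ← collapse_map (permFOfun π) (permFOfun_inj π) (permFOfun_isMark π)]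
  congr 1
  unfold permOut
  rw [List.map_map, List.map_map]
  refine List.map_congr_left fun t ht => ?_
  by_cases h : t.2.2 ≤ x.length <;> simp [permFOfun, h, Function.comp]

lemma map_snd_permW (π : Equiv.Perm D) (u : DataWord A D) :
    (permW π u).map Prod.snd = (u.map Prod.snd).map π := by
  simp [permW, List.map_map, Function.comp_def]

lemma map_snd_replaceD (u : DataWord A D) (d c : D) :
    (replaceD u d c).map Prod.snd
      = (u.map Prod.snd).map (fun e => if e = d then c else e) := by
  simp [replaceD, List.map_map, Function.comp_def]

lemma replaceD_self (u : DataWord A D) (d : D) : replaceD u d d = u := by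
  conv_rhs => rw [← List.map_id u]
  refine List.map_congr_left fun p hp => ?_
  obtain ⟨a, e⟩ := p
  by_cases h : e = d <;> simp [replaceD, h]

lemma replaceD_of_not_mem {u : DataWord A D} {d : D} (h : d ∉ u.map Prod.snd)
    (d' : D) : replaceD u d d' = u := by
  conv_rhs => rw [← List.map_id u]
  refine List.map_congr_left fun p hp => ?_
  have : p.2 ≠ d := fun he => h (he ▸ List.mem_map_of_mem (f := Prod.snd) hp)
  simp [replaceD, this]

lemma replaceD_perm (π : Equiv.Perm D) (u : DataWord A D) (d d' : D) :
    replaceD (permW π u) (π d) (π d') = permW π (replaceD u d d') := by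
  unfold replaceD permW
  rw [List.map_map, List.map_map]
  refine List.map_congr_left fun p hp => ?_
  by_cases h : p.2 = d <;> simp [Function.comp, h]

lemma getElem?_fst_permW (π : Equiv.Perm D) (u : DataWord A D) (i : ℕ) :
    ((permW π u)[i]?).map Prod.fst = (u[i]?).map Prod.fst := by
  rw [getElem?_permW]; cases u[i]? <;> simp

lemma getElem?_snd_permW (π : Equiv.Perm D) (u : DataWord A D) (i : ℕ) :
    ((permW π u)[i]?).map Prod.snd = ((u[i]?).map Prod.snd).map π := by
  rw [getElem?_permW]; cases u[i]? <;> simp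

lemma getElem?_replaceD (u : DataWord A D) (d c : D) (i : ℕ) :
    (replaceD u d c)[i]? = Option.map (fun p => (p.1, if p.2 = d then c else p.2)) u[i]? :=
  List.getElem?_map

lemma getElem?_fst_replaceD (u : DataWord A D) (d c : D) (i : ℕ) :
    ((replaceD u d c)[i]?).map Prod.fst = (u[i]?).map Prod.fst := by
  rw [getElem?_replaceD]; cases u[i]? <;> simp

lemma getElem?_snd_replaceD (u : DataWord A D) (d c : D) (i : ℕ) :
    ((replaceD u d c)[i]?).map Prod.snd
      = ((u[i]?).map Prod.snd).map (fun e => if e = d then c else e) := by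
  rw [getElem?_replaceD]; cases u[i]? <;> simp

lemma iso_perm (π : Equiv.Perm D) {u v : DataWord A D} (h : Iso u v) :
    Iso (permW π u) (permW π v) := by
  obtain ⟨hl, hf, hs⟩ := h
  refine ⟨by simp [hl], fun i => by rw [getElem?_fst_permW, getElem?_fst_permW, hf],
    fun i j => ?_⟩
  rw [getElem?_snd_permW, getElem?_snd_permW, getElem?_snd_permW, getElem?_snd_permW,
    (Option.map_injective π.injective).eq_iff, (Option.map_injective π.injective).eq_iff]
  exact hs i j

lemma safeRepl_perm (π : Equiv.Perm D) {u : DataWord A D} {d d' : D}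
    (h : SafeRepl d d' u) : SafeRepl (π d) (π d') (permW π u) := by
  unfold SafeRepl at *
  rw [replaceD_perm]
  exact iso_perm π h

lemma occursIn_iff {d : D} {u : DataWord A D} : OccursIn d u ↔ d ∈ u.map Prod.snd :=
  List.mem_map.symm

lemma safeRepl_of_not_mem {c : D} {u : DataWord A D} (h : c ∉ u.map Prod.snd) (d : D) :
    SafeRepl d c u := by
  refine ⟨by simp [replaceD], fun i => getElem?_fst_replaceD u d c i, fun i j => ?_⟩
  rw [getElem?_snd_replaceD, getElem?_snd_replaceD]
  have hv : ∀ {k : ℕ} {e : D}, (u[k]?).map Prod.snd = some e → e ∈ u.map Prod.snd := by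
    intro k e hk
    cases hu : u[k]? with
    | none => rw [hu] at hk; simp at hk
    | some p =>
      rw [hu] at hk
      simp only [Option.map_some] at hk
      cases hk
      exact List.mem_map_of_mem (f := Prod.snd) (List.mem_iff_getElem?.mpr ⟨k, hu⟩)
  cases hi : (u[i]?).map Prod.snd with
  | none => cases hj : (u[j]?).map Prod.snd <;> simp
  | some e =>
    cases hj : (u[j]?).map Prod.snd with
    | none => simp
    | some e' =>
      have he : e ≠ c := fun hh => h (hh ▸ hv hi)
      have he' : e' ≠ c := fun hh => h (hh ▸ hv hj)
      simp only [Option.map_some, Option.some.injEq]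
      by_cases h1 : e = d <;> by_cases h2 : e' = d
      · simp [h1, h2]
      · simp only [if_pos h1, if_neg h2]
        exact iff_of_false (fun hh => he' hh.symm) (fun hh => h2 (hh.symm.trans h1))
      · simp only [if_neg h1, if_pos h2]
        exact iff_of_false he (fun hh => h1 (hh.trans h2))
      · simp [h1, h2]

lemma safeRepl_not_mem_of_ne {u : DataWord A D} {d d' : D} (h : SafeRepl d d' u)
    (hd : d ∈ u.map Prod.snd) (hne : d' ≠ d) : d' ∉ u.map Prod.snd := by
  intro hd'
  obtain ⟨p, hp, hpd⟩ := List.mem_map.mp hd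
  obtain ⟨q, hq, hqd⟩ := List.mem_map.mp hd'
  obtain ⟨i, hi⟩ := List.mem_iff_getElem?.mp hp
  obtain ⟨j, hj⟩ := List.mem_iff_getElem?.mp hq
  have hs := (h.2.2 i j).mp ?_
  · rw [hi, hj] at hs
    simp only [Option.map_some] at hs
    rw [hpd, hqd] at hs
    exact hne (Option.some.injEq _ _ ▸ hs).symm
  · rw [getElem?_snd_replaceD, getElem?_snd_replaceD, hi, hj]
    simp only [Option.map_some]
    rw [hpd, hqd]
    simp [hne]

lemma permW_eq_self_of_fixed {σ : Equiv.Perm D} {u : DataWord A D}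
    (h : ∀ e ∈ u.map Prod.snd, σ e = e) : permW σ u = u := by
  conv_rhs => rw [← List.map_id u]
  refine List.map_congr_left fun p hp => ?_
  simp [permW, h p.2 (List.mem_map_of_mem (f := Prod.snd) hp)]

lemma permW_swap_eq_replaceD {u : DataWord A D} {d d' : D}
    (h : d' ∉ u.map Prod.snd) : permW (Equiv.swap d d') u = replaceD u d d' := by
  unfold permW replaceD
  refine List.map_congr_left fun p hp => ?_
  by_cases hpd : p.2 = d
  · simp [hpd]
  · have : p.2 ≠ d' := fun hh => h (hh ▸ List.mem_map_of_mem (f := Prod.snd) hp)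
    simp [hpd, Equiv.swap_apply_of_ne_of_ne hpd this]

end Equivariance

section InfluencingLemmas

variable [DecidableEq G] [DecidableEq D] {f : Transduction A G D}

lemma memorable_perm (hperm : PermInvariant f) (π : Equiv.Perm D) {d : D}
    {u : DataWord A D} (h : Memorable f d u) : Memorable f (π d) (permW π u) := by
  obtain ⟨v, d', hs, hne⟩ := h
  refine ⟨permW π v, π d', safeRepl_perm π hs, fun heq => hne ?_⟩
  rw [replaceD_perm, leftFac_perm hperm, leftFac_perm hperm] at heq
  exact (permFO_inj π).mp heq

lemma memorable_perm_iff (hperm : PermInvariant f) (π : Equiv.Perm D) {d : D}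
    {u : DataWord A D} : Memorable f (π d) (permW π u) ↔ Memorable f d u := by
  refine ⟨fun h => ?_, memorable_perm hperm π⟩
  have := memorable_perm hperm π⁻¹ h
  simpa using this

lemma vulnerable_perm (hperm : PermInvariant f) (π : Equiv.Perm D) {d : D}
    {u : DataWord A D} (h : Vulnerable f d u) : Vulnerable f (π d) (permW π u) := by
  obtain ⟨u', v, d', hocc, hs, hne⟩ := h
  refine ⟨permW π u', permW π v, π d', ?_, ?_, fun heq => hne ?_⟩
  · intro hoc
    apply hocc
    rw [occursIn_iff, map_snd_permW] at hoc
    rw [occursIn_iff]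
    obtain ⟨e, he, hee⟩ := List.mem_map.mp hoc
    rwa [← π.injective hee]
  · have := safeRepl_perm π hs
    rwa [permW_append, permW_append] at this
  · rw [← permW_append, replaceD_perm, rightFac_perm hperm, rightFac_perm hperm] at heq
    exact (permFO_inj π).mp heq

lemma vulnerable_perm_iff (hperm : PermInvariant f) (π : Equiv.Perm D) {d : D}
    {u : DataWord A D} : Vulnerable f (π d) (permW π u) ↔ Vulnerable f d u := by
  refine ⟨fun h => ?_, vulnerable_perm hperm π⟩
  have := vulnerable_perm hperm π⁻¹ h
  simpa using this

lemma influencing_perm_iff (hperm : PermInvariant f) (π : Equiv.Perm D) {d : D}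
    {u : DataWord A D} : Influencing f (π d) (permW π u) ↔ Influencing f d u := by
  unfold Influencing
  rw [memorable_perm_iff hperm, vulnerable_perm_iff hperm]

lemma memorable_occurs {d : D} {u : DataWord A D} (h : Memorable f d u) :
    d ∈ u.map Prod.snd := by
  by_contra hd
  obtain ⟨v, d', hs, hne⟩ := h
  exact hne (by rw [replaceD_of_not_mem hd])

lemma vulnerable_occurs (hperm : PermInvariant f) (hpeek : NoDataPeeking f)
    {d : D} {w : DataWord A D} (h : Vulnerable f d w) : d ∈ w.map Prod.snd := by
  by_contra hdw
  obtain ⟨u', v, d', hocc, hs, hne⟩ := h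
  apply hne
  by_cases hdd : d' = d
  · rw [hdd, replaceD_self]
  by_cases hdv : d ∈ v.map Prod.snd
  swap
  · rw [replaceD_of_not_mem hdv]
  have hdu' : d ∉ u'.map Prod.snd := fun hh => hocc (occursIn_iff.mpr hh)
  have hdmem : d ∈ (w ++ u' ++ v).map Prod.snd := by
    rw [List.map_append, List.mem_append]
    exact Or.inr hdv
  have hd' : d' ∉ (w ++ u' ++ v).map Prod.snd := safeRepl_not_mem_of_ne hs hdmem hdd
  rw [List.map_append, List.map_append] at hd'
  simp only [List.mem_append, not_or] at hd'
  obtain ⟨⟨hd'w, hd'u⟩, hd'v⟩ := hd'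
  set σ := Equiv.swap d d' with hσ
  have hfix : ∀ e ∈ (w ++ u').map Prod.snd, σ e = e := by
    intro e he
    rw [List.map_append, List.mem_append] at he
    have hed : e ≠ d := fun hh => by cases he with
      | inl h1 => exact hdw (hh ▸ h1)
      | inr h1 => exact hdu' (hh ▸ h1)
    have hed' : e ≠ d' := fun hh => by cases he with
      | inl h1 => exact hd'w (hh ▸ h1)
      | inr h1 => exact hd'u (hh ▸ h1)
    exact Equiv.swap_apply_of_ne_of_ne hed hed'
  have h1 : permW σ (w ++ u') = w ++ u' := permW_eq_self_of_fixed hfix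
  have h2 : permW σ v = replaceD v d d' := permW_swap_eq_replaceD hd'v
  rw [← h2]
  unfold rightFac
  have hin : (w ++ u') ++ permW σ v = permW σ ((w ++ u') ++ v) := by
    rw [permW_append, h1]
  rw [hin, hperm]
  congr 1
  unfold permOut
  rw [List.map_map]
  refine List.map_congr_left fun t ht => ?_
  by_cases hlen : w.length + u'.length < t.2.2
  · simp [Function.comp, hlen]
  · obtain ⟨i, a, hia, hio⟩ := hpeek _ t ht
    have hi : i < (w ++ u').length := by rw [List.length_append]; omega
    have hia' : (w ++ u')[i]? = some (a, t.2.1) := by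
      rwa [List.getElem?_append, if_pos hi] at hia
    have hmem : t.2.1 ∈ (w ++ u').map Prod.snd :=
      List.mem_map_of_mem (f := Prod.snd) (List.mem_iff_getElem?.mpr ⟨i, hia'⟩)
    have hfx : σ t.2.1 = t.2.1 := hfix _ hmem
    simp [Function.comp, hlen, hfx]

lemma isLastOcc_unique {u : DataWord A D} {d : D} {i j : ℕ}
    (h : IsLastOcc u d i) (h' : IsLastOcc u d j) : i = j := by
  rcases lt_trichotomy i j with hl | he | hl
  · obtain ⟨a, ha⟩ := h'.1
    exact absurd rfl (h.2 j hl (a, d) ha)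
  · exact he
  · obtain ⟨a, ha⟩ := h.1
    exact absurd rfl (h'.2 i hl (a, d) ha)

lemma exists_isLastOcc {u : DataWord A D} {d : D} (h : d ∈ u.map Prod.snd) :
    ∃ i, IsLastOcc u d i := by
  classical
  obtain ⟨p, hp, hpd⟩ := List.mem_map.mp h
  obtain ⟨i0, hi0⟩ := List.mem_iff_getElem?.mp hp
  set s : Finset ℕ :=
    (Finset.range u.length).filter (fun i => (u[i]?).map Prod.snd = some d) with hs
  have hi0s : i0 ∈ s := by
    rw [hs, Finset.mem_filter, Finset.mem_range]
    refine ⟨(List.getElem?_eq_some_iff.mp hi0).1, by rw [hi0]; simp [hpd]⟩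
  have hne : s.Nonempty := ⟨i0, hi0s⟩
  refine ⟨s.max' hne, ?_, ?_⟩
  · have := (Finset.mem_filter.mp (s.max'_mem hne)).2
    cases hq : u[s.max' hne]? with
    | none => rw [hq] at this; simp at this
    | some q =>
      rw [hq] at this
      simp only [Option.map_some, Option.some.injEq] at this
      exact ⟨q.1, by rw [← this]⟩
  · intro j hj p' hp' hp'd
    have hjs : j ∈ s := by
      rw [hs, Finset.mem_filter, Finset.mem_range]
      exact ⟨(List.getElem?_eq_some_iff.mp hp').1, by rw [hp']; simp [hp'd]⟩
    exact absurd (s.le_max' j hjs) (not_le.mpr hj)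

lemma isLastOcc_perm (π : Equiv.Perm D) {u : DataWord A D} {d : D} {i : ℕ}
    (h : IsLastOcc u d i) : IsLastOcc (permW π u) (π d) i := by
  obtain ⟨⟨a, ha⟩, hmax⟩ := h
  refine ⟨⟨a, by rw [getElem?_permW, ha]; rfl⟩, fun j hj p hp hpd => ?_⟩
  rw [getElem?_permW] at hp
  obtain ⟨q, hq, hqp⟩ := Option.map_eq_some_iff.mp hp
  have : p.2 = π q.2 := by rw [← hqp]
  rw [this] at hpd
  exact hmax j hj q hq (π.injective hpd)

lemma fresher_perm (π : Equiv.Perm D) {u : DataWord A D} {d e : D}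
    (h : Fresher u d e) : Fresher (permW π u) (π d) (π e) := by
  obtain ⟨i, j, h1, h2, hlt⟩ := h
  exact ⟨i, j, isLastOcc_perm π h1, isLastOcc_perm π h2, hlt⟩

lemma fresher_asymm {u : DataWord A D} {d e : D}
    (h : Fresher u d e) (h' : Fresher u e d) : False := by
  obtain ⟨i, j, h1, h2, hlt⟩ := h
  obtain ⟨i', j', h1', h2', hlt'⟩ := h'
  have e1 := isLastOcc_unique h1 h2'
  have e2 := isLastOcc_unique h2 h1'
  omega

lemma fresher_ne {u : DataWord A D} {d e : D} (h : Fresher u d e) : d ≠ e := by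
  rintro rfl
  obtain ⟨i, j, h1, h2, hlt⟩ := h
  have := isLastOcc_unique h1 h2
  omega

end InfluencingLemmas

section IflSeq

variable [DecidableEq G] [DecidableEq D] {f : Transduction A G D}

lemma influencing_occurs (hperm : PermInvariant f) (hpeek : NoDataPeeking f)
    {d : D} {u : DataWord A D} (h : Influencing f d u) : d ∈ u.map Prod.snd := by
  cases h with
  | inl h => exact memorable_occurs h
  | inr h => exact vulnerable_occurs hperm hpeek h

lemma exists_isAiflSeq (hperm : PermInvariant f) (hpeek : NoDataPeeking f)
    (u : DataWord A D) : ∃ al, IsAiflSeq f u al := by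
  classical
  set F : ℕ → Option D := fun i =>
    match u[i]? with
    | some p => if Influencing f p.2 u ∧ IsLastOcc u p.2 i then some p.2 else none
    | none => none with hF
  have hFspec : ∀ i x, F i = some x → Influencing f x u ∧ IsLastOcc u x i := by
    intro i x hx
    simp only [hF] at hx
    cases hui : u[i]? with
    | none =>
      rw [hui] at hx
      cases hx
    | some p =>
      rw [hui] at hx
      have hx' : (if Influencing f p.2 u ∧ IsLastOcc u p.2 i then some p.2 else none)
          = some x := hx
      by_cases hc : Influencing f p.2 u ∧ IsLastOcc u p.2 i
      · rw [if_pos hc] at hx'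
        cases hx'
        exact hc
      · rw [if_neg hc] at hx'
        cases hx'
  set l : List D := ((List.range u.length).reverse).filterMap F with hl
  have hsrc : ((List.range u.length).reverse).Pairwise (fun a b => b < a) :=
    List.pairwise_reverse.mpr (by simpa using (List.pairwise_lt_range (n := u.length)))
  have hP : l.Pairwise (Fresher u) := by
    refine List.Pairwise.filterMap F (fun i j hij x hx y hy => ?_) hsrc
    obtain ⟨hxi, hxl⟩ := hFspec i x hx
    obtain ⟨hyi, hyl⟩ := hFspec j y hy
    exact ⟨i, j, hxl, hyl, hij⟩
  have hmem : ∀ d, d ∈ l ↔ Influencing f d u := by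
    intro d
    constructor
    · intro hd
      obtain ⟨i, _, hFi⟩ := List.mem_filterMap.mp hd
      exact (hFspec i d hFi).1
    · intro hd
      obtain ⟨i, hi⟩ := exists_isLastOcc (influencing_occurs hperm hpeek hd)
      obtain ⟨a, ha⟩ := hi.1
      refine List.mem_filterMap.mpr ⟨i, ?_, ?_⟩
      · rw [List.mem_reverse, List.mem_range]
        exact (List.getElem?_eq_some_iff.mp ha).1
      · have goal2 : F i = some ((a, d) : A × D).2 := by
          simp only [hF]
          rw [ha]
          exact if_pos ⟨hd, hi⟩
        exact goal2
  have hnd : l.Nodup := hP.imp fresher_ne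
  set ty : D → IflType := fun d =>
    if Memorable f d u then (if Vulnerable f d u then .vm else .m) else .v with hty
  refine ⟨l.map (fun d => (d, ty d)), ⟨?_, ?_⟩⟩
  · have : (l.map (fun d => (d, ty d))).map Prod.fst = l := by
      have h1 : (Prod.fst ∘ fun d : D => (d, ty d)) = id := rfl
      rw [List.map_map, h1, List.map_id]
    rw [this]
    exact ⟨hmem, hnd, fun i j hi hj hij => List.pairwise_iff_get.mp hP ⟨i, hi⟩ ⟨j, hj⟩ hij⟩
  · intro p hp
    obtain ⟨d, hd, rfl⟩ := List.mem_map.mp hp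
    have hinf : Influencing f d u := (hmem d).mp hd
    rw [hty]
    by_cases hm : Memorable f d u
    · by_cases hv : Vulnerable f d u
      · simp only [if_pos hm, if_pos hv]
        exact ⟨hm, hv⟩
      · simp only [if_pos hm, if_neg hv]
        exact ⟨hm, hv⟩
    · have hv : Vulnerable f d u := hinf.resolve_left hm
      simp only [if_neg hm]
      exact ⟨hv, hm⟩

lemma isIflSeq_unique {u : DataWord A D} {l l' : List D}
    (h : IsIflSeq f u l) (h' : IsIflSeq f u l') : l = l' := by
  classical
  obtain ⟨hmem, hnd, hord⟩ := h
  obtain ⟨hmem', hnd', hord'⟩ := h'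
  have hP : l.Pairwise (Fresher u) :=
    List.pairwise_iff_get.mpr fun i j hij => hord i j i.2 j.2 hij
  have hP' : l'.Pairwise (Fresher u) :=
    List.pairwise_iff_get.mpr fun i j hij => hord' i j i.2 j.2 hij
  haveI : IsAntisymm D (Fresher u) := ⟨fun a b hab hba => absurd hab (fun h => fresher_asymm h hba)⟩
  have hperm : l.Perm l' := by
    refine List.perm_of_nodup_nodup_toFinset_eq hnd hnd' ?_
    ext d
    rw [List.mem_toFinset, List.mem_toFinset, hmem, hmem']
  exact List.Perm.eq_of_pairwise (fun a b _ _ hab hba => absurd hab (fun h => fresher_asymm h hba)) hP hP' hperm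

lemma isAiflSeq_perm (hperm : PermInvariant f) (π : Equiv.Perm D)
    {u : DataWord A D} {al : List (D × IflType)} (h : IsAiflSeq f u al) :
    IsAiflSeq f (permW π u) (al.map fun p => (π p.1, p.2)) := by
  obtain ⟨⟨hmem, hnd, hord⟩, hty⟩ := h
  set l : List D := al.map Prod.fst with hl
  have hfst : (al.map fun p => (π p.1, p.2)).map Prod.fst = l.map π := by
    rw [hl, List.map_map, List.map_map]; rfl
  constructor
  · rw [hfst]
    refine ⟨?_, hnd.map π.injective, ?_⟩
    · intro d
      have h1 : d ∈ l.map π ↔ π⁻¹ d ∈ l := by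
        constructor
        · intro hd
          obtain ⟨e, he, rfl⟩ := List.mem_map.mp hd
          simpa using he
        · intro hd
          exact List.mem_map.mpr ⟨π⁻¹ d, hd, by simp⟩
      have h2 : Influencing f d (permW π u) ↔ Influencing f (π⁻¹ d) u := by
        have := influencing_perm_iff hperm π (d := π⁻¹ d) (u := u)
        simpa using this
      rw [h1, h2, hmem]
    · intro i j hi hj hij
      have hi' : i < l.length := by simpa using hi
      have hj' : j < l.length := by simpa using hj
      have gi : (l.map π).get ⟨i, hi⟩ = π (l.get ⟨i, hi'⟩) := by simp
      have gj : (l.map π).get ⟨j, hj⟩ = π (l.get ⟨j, hj'⟩) := by simp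
      rw [gi, gj]
      exact fresher_perm π (hord i j hi' hj' hij)
  · intro p hp
    obtain ⟨q, hq, rfl⟩ := List.mem_map.mp hp
    have h0 := hty q hq
    cases hqt : q.2 with
    | vm =>
      rw [hqt] at h0
      exact ⟨(memorable_perm_iff hperm π).mpr h0.1, (vulnerable_perm_iff hperm π).mpr h0.2⟩
    | m =>
      rw [hqt] at h0
      exact ⟨(memorable_perm_iff hperm π).mpr h0.1,
        fun hv => h0.2 ((vulnerable_perm_iff hperm π).mp hv)⟩
    | v =>
      rw [hqt] at h0
      exact ⟨(vulnerable_perm_iff hperm π).mpr h0.1,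
        fun hm => h0.2 ((memorable_perm_iff hperm π).mp hm)⟩

end IflSeq

section FixVuln

variable [DecidableEq G] [DecidableEq D] [Infinite D] {f : Transduction A G D}

lemma not_vulnerable_replace {w v : DataWord A D} {d c : D}
    (hnv : ¬ Vulnerable f d w) (hcw : c ∉ w.map Prod.snd) (hcv : c ∉ v.map Prod.snd) :
    rightFac f w (replaceD v d c) = rightFac f w v := by
  by_contra hne
  apply hnv
  refine ⟨[], v, c, ?_, ?_, ?_⟩
  · rintro ⟨p, hp, -⟩
    exact absurd hp List.not_mem_nil
  · have heq : w ++ ([] : DataWord A D) ++ v = w ++ v := by simp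
    unfold SafeRepl
    rw [heq]
    exact safeRepl_of_not_mem (by
      rw [List.map_append, List.mem_append]
      rintro (h | h)
      exacts [hcw h, hcv h]) d
  · rw [List.append_nil]
    exact hne

lemma fix_vuln_aux (hperm : PermInvariant f) (hpeek : NoDataPeeking f)
    (w : DataWord A D) :
    ∀ (n : ℕ) (σ : Equiv.Perm D) (v : DataWord A D),
      ((v.map Prod.snd).toFinset.filter (fun e => σ e ≠ e)).card = n →
      (∀ e, Vulnerable f e w → σ e = e) →
      rightFac f w (permW σ v) = rightFac f w v := by
  intro n
  induction n using Nat.strong_induction_on with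
  | _ n ih =>
    intro σ v hcard hfix
    rcases Nat.eq_zero_or_pos n with hz | hpos
    · rw [hz] at hcard
      have hemp := Finset.card_eq_zero.mp hcard
      have hfixv : ∀ e ∈ v.map Prod.snd, σ e = e := by
        intro e he
        by_contra hnee
        have : e ∈ (v.map Prod.snd).toFinset.filter (fun e => σ e ≠ e) :=
          Finset.mem_filter.mpr ⟨List.mem_toFinset.mpr he, hnee⟩
        rw [hemp] at this
        exact absurd this (Finset.notMem_empty e)
      rw [permW_eq_self_of_fixed hfixv]
    · have hpos' : 0 < ((v.map Prod.snd).toFinset.filter (fun e => σ e ≠ e)).card := by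
        rw [hcard]; exact hpos
      obtain ⟨d, hd⟩ := Finset.card_pos.mp hpos'
      have hdmem : d ∈ v.map Prod.snd := List.mem_toFinset.mp (Finset.mem_filter.mp hd).1
      have hdmov : σ d ≠ d := (Finset.mem_filter.mp hd).2
      obtain ⟨c, hc⟩ := Infinite.exists_notMem_finset
        ((w.map Prod.snd).toFinset ∪ (v.map Prod.snd).toFinset
          ∪ ((permW σ v).map Prod.snd).toFinset)
      simp only [Finset.mem_union, not_or, List.mem_toFinset] at hc
      obtain ⟨⟨hcw, hcv⟩, hcσv⟩ := hc
      have hnvd : ¬ Vulnerable f d w := fun hv => hdmov (hfix d hv)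
      have hnvσd : ¬ Vulnerable f (σ d) w := fun hv => by
        have := hfix _ hv
        exact hdmov (σ.injective this)
      set σ'' : Equiv.Perm D := (Equiv.swap (σ d) c) * σ * (Equiv.swap d c) with hσ''
      have hσ''c : σ'' c = c := by
        rw [hσ'']
        simp [Equiv.Perm.mul_apply, Equiv.swap_apply_right, Equiv.swap_apply_left]
      have hσ''e : ∀ e, e ≠ d → e ≠ c → σ e ≠ c → σ'' e = σ e := by
        intro e h1 h2 h3
        have h4 : σ e ≠ σ d := fun hh => h1 (σ.injective hh)
        rw [hσ'']
        simp [Equiv.Perm.mul_apply, Equiv.swap_apply_of_ne_of_ne h1 h2,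
          Equiv.swap_apply_of_ne_of_ne h4 h3]
      have hword : replaceD (permW σ v) (σ d) c = permW σ'' (replaceD v d c) := by
        unfold replaceD permW
        rw [List.map_map, List.map_map]
        refine List.map_congr_left fun p hp => ?_
        simp only [Function.comp]
        by_cases hpd : p.2 = d
        · rw [hpd]
          simp [hσ''c]
        · have h2 : p.2 ≠ c := fun hh => hcv (hh ▸ List.mem_map_of_mem (f := Prod.snd) hp)
          have h3 : σ p.2 ≠ c := fun hh => hcσv (by
            rw [← hh]
            rw [map_snd_permW]
            exact List.mem_map_of_mem (List.mem_map_of_mem (f := Prod.snd) hp))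
          have h4 : σ p.2 ≠ σ d := fun hh => hpd (σ.injective hh)
          simp [hpd, h4, hσ''e p.2 hpd h2 h3]
      have hfix'' : ∀ e, Vulnerable f e w → σ'' e = e := by
        intro e he
        have h1 : σ e = e := hfix e he
        have hed : e ≠ d := fun hh => hdmov (by rw [← hh] at hdmov ⊢; exact h1)
        have hec : e ≠ c := fun hh => hcw (hh ▸ vulnerable_occurs hperm hpeek he)
        rw [hσ''e e hed hec (by rw [h1]; exact hec), h1]
      have hsub : ((replaceD v d c).map Prod.snd).toFinset.filter (fun e => σ'' e ≠ e)
          ⊆ ((v.map Prod.snd).toFinset.filter (fun e => σ e ≠ e)).erase d := by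
        intro e he
        obtain ⟨hm, hmov⟩ := Finset.mem_filter.mp he
        rw [List.mem_toFinset, map_snd_replaceD] at hm
        obtain ⟨x, hx, hxe⟩ := List.mem_map.mp hm
        by_cases hxd : x = d
        · rw [if_pos hxd] at hxe
          exact absurd (hxe ▸ hσ''c) hmov
        · rw [if_neg hxd] at hxe
          subst hxe
          have hec : x ≠ c := fun hh => hcv (hh ▸ hx)
          have hmovx : σ x ≠ x := by
            intro hσx
            exact hmov (by rw [hσ''e x hxd hec (by rw [hσx]; exact hec), hσx])
          exact Finset.mem_erase.mpr ⟨hxd,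
            Finset.mem_filter.mpr ⟨List.mem_toFinset.mpr hx, hmovx⟩⟩
      have hcard'' : (((replaceD v d c).map Prod.snd).toFinset.filter
          (fun e => σ'' e ≠ e)).card < n := by
        calc _ ≤ (((v.map Prod.snd).toFinset.filter (fun e => σ e ≠ e)).erase d).card :=
              Finset.card_le_card hsub
          _ = n - 1 := by rw [Finset.card_erase_of_mem hd, hcard]
          _ < n := by omega
      calc rightFac f w (permW σ v)
          = rightFac f w (replaceD (permW σ v) (σ d) c) :=
            (not_vulnerable_replace hnvσd hcw hcσv).symm
        _ = rightFac f w (permW σ'' (replaceD v d c)) := by rw [hword]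
        _ = rightFac f w (replaceD v d c) := ih _ hcard'' σ'' _ rfl hfix''
        _ = rightFac f w v := not_vulnerable_replace hnvd hcw hcv

lemma fix_vuln (hperm : PermInvariant f) (hpeek : NoDataPeeking f)
    {w : DataWord A D} {σ : Equiv.Perm D}
    (hfix : ∀ e, Vulnerable f e w → σ e = e) (v : DataWord A D) :
    rightFac f w (permW σ v) = rightFac f w v :=
  fix_vuln_aux hperm hpeek w _ σ v rfl hfix

end FixVuln

section Finiteness

variable [DecidableEq G] [DecidableEq D] {f : Transduction A G D}

lemma countP_le_add {α : Type*} {p q r : α → Bool} {l : List α}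
    (h : ∀ a ∈ l, p a → q a = true ∨ r a = true) :
    l.countP p ≤ l.countP q + l.countP r := by
  induction l with
  | nil => simp
  | cons a t ih =>
    have ih' := ih (fun b hb => h b (List.mem_cons_of_mem a hb))
    rw [List.countP_cons, List.countP_cons, List.countP_cons]
    by_cases hp : p a = true
    · rcases h a (List.mem_cons_self) hp with hq | hr
      · rw [if_pos hp, if_pos hq]
        split_ifs <;> omega
      · rw [if_pos hp, if_pos hr]
        split_ifs <;> omega
    · rw [if_neg hp]
      split_ifs <;> omega

lemma countP_origin_le (hpeek : NoDataPeeking f) {K : ℕ}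
    (hK : ∀ (w : DataWord A D) (o : ℕ), 1 ≤ o → o ≤ w.length →
      ((f w).filter fun t => t.2.2 == o).length ≤ K)
    (x v : DataWord A D) :
    (f (x ++ v)).countP (fun t => t.2.2 ≤ x.length) ≤ K * x.length := by
  have hxle : x.length ≤ (x ++ v).length := by
    rw [List.length_append]; omega
  have aux : ∀ m, m ≤ x.length →
      (f (x ++ v)).countP (fun t => t.2.2 ≤ m) ≤ K * m := by
    intro m
    induction m with
    | zero =>
      intro _
      rw [List.countP_eq_zero.mpr]
      · omega
      · intro t ht
        obtain ⟨i, a, _, hio⟩ := hpeek _ t ht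
        simp only [decide_eq_true_eq]
        omega
    | succ m ihm =>
      intro hm
      have h1 : (f (x ++ v)).countP (fun t => t.2.2 ≤ m + 1)
          ≤ (f (x ++ v)).countP (fun t => t.2.2 ≤ m)
            + (f (x ++ v)).countP (fun t => t.2.2 == m + 1) := by
        refine countP_le_add fun t _ hp => ?_
        simp only [decide_eq_true_eq] at hp ⊢
        by_cases h : t.2.2 ≤ m
        · exact Or.inl (by simpa using h)
        · exact Or.inr (by simp; omega)
      have h2 : (f (x ++ v)).countP (fun t => t.2.2 == m + 1) ≤ K := by
        rw [List.countP_eq_length_filter]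
        exact hK (x ++ v) (m + 1) (by omega) (by omega)
      have h3 := ihm (by omega)
      calc (f (x ++ v)).countP (fun t => t.2.2 ≤ m + 1)
          ≤ K * m + K := by omega
        _ = K * (m + 1) := by ring
  exact aux x.length le_rfl

lemma marks_le_tris : ∀ (n : ℕ) (l : List (FOElem G D)), l.length ≤ n →
    (∀ e ∈ l, e = FOElem.right ∨ e.isTri = true) →
    List.Chain' (fun a b => ¬(a = b ∧ a.isMark = true)) l →
    l.countP (fun e => !e.isTri) ≤ l.countP (fun e => e.isTri) + 1 := by
  intro n
  induction n with
  | zero =>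
    intro l hl _ _
    have : l = [] := List.length_eq_zero_iff.mp (Nat.le_zero.mp hl)
    subst this
    simp
  | succ n ihn =>
    intro l hl hall hch
    cases l with
    | nil => simp
    | cons a t =>
      cases t with
      | nil =>
        rcases hall a (List.mem_cons_self) with rfl | h
        · simp [List.countP_cons, FOElem.isTri]
        · simp [List.countP_cons, h]
      | cons b r =>
        rcases hall a (List.mem_cons_self) with rfl | h
        · have hb : b.isTri = true := by
            rcases hall b (List.mem_cons_of_mem _ (List.mem_cons_self)) with rfl | hh
            · exfalso
              have hR := List.isChain_cons.mp hch
              exact hR.1 _ rfl ⟨rfl, rfl⟩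
            · exact hh
          have hr : r.countP (fun e => !e.isTri) ≤ r.countP (fun e => e.isTri) + 1 := by
            refine ihn r ?_
              (fun e he => hall e (List.mem_cons_of_mem _ (List.mem_cons_of_mem _ he)))
              (List.IsChain.tail (List.IsChain.tail hch))
            simp only [List.length_cons] at hl
            omega
          have hR1 : (FOElem.right : FOElem G D).isTri = false := rfl
          simp [List.countP_cons, hb, hR1]
          omega
        · have ht : (b :: r).countP (fun e => !e.isTri)
              ≤ (b :: r).countP (fun e => e.isTri) + 1 := by
            refine ihn (b :: r) ?_ (fun e he => hall e (List.mem_cons_of_mem _ he)) (List.IsChain.tail hch)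
            simp only [List.length_cons] at hl ⊢
            omega
          have e1 : (a :: b :: r).countP (fun e => !e.isTri)
              = (b :: r).countP (fun e => !e.isTri) := by
            rw [List.countP_cons]; simp [h]
          have e2 : (a :: b :: r).countP (fun e => e.isTri)
              = (b :: r).countP (fun e => e.isTri) + 1 := by
            rw [List.countP_cons]; simp [h]
          rw [e1, e2]
          omega

lemma rightFac_elem_cases {x v : DataWord A D} {e : FOElem G D}
    (he : e ∈ rightFac f x v) : e = FOElem.right ∨ e.isTri = true := by
  unfold rightFac at he
  have he' := (collapse_sublist _).subset he
  obtain ⟨t, ht, hte⟩ := List.mem_map.mp he'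
  by_cases h : x.length < t.2.2
  · rw [if_pos h] at hte
    exact Or.inl hte.symm
  · rw [if_neg h] at hte
    rw [← hte]
    exact Or.inr rfl

lemma rightFac_mem (hpeek : NoDataPeeking f) {x v : DataWord A D} {e : FOElem G D}
    (he : e ∈ rightFac f x v) :
    e = FOElem.right ∨ ∃ (g : G) (d : D) (o : ℕ), e = FOElem.tri g d (o : ℤ)
      ∧ d ∈ x.map Prod.snd ∧ 1 ≤ o ∧ o ≤ x.length := by
  unfold rightFac at he
  have he' := (collapse_sublist _).subset he
  obtain ⟨t, ht, hte⟩ := List.mem_map.mp he'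
  by_cases h : x.length < t.2.2
  · rw [if_pos h] at hte
    exact Or.inl hte.symm
  · rw [if_neg h] at hte
    obtain ⟨i, a, hia, hio⟩ := hpeek _ t ht
    have hi : i < x.length := by omega
    have hia' : x[i]? = some (a, t.2.1) := by
      rwa [List.getElem?_append, if_pos hi] at hia
    exact Or.inr ⟨t.1, t.2.1, t.2.2, hte.symm,
      List.mem_map_of_mem (f := Prod.snd) (List.mem_iff_getElem?.mpr ⟨i, hia'⟩), by omega, by omega⟩

lemma rightFac_length_le (hpeek : NoDataPeeking f) {K : ℕ}
    (hK : ∀ (w : DataWord A D) (o : ℕ), 1 ≤ o → o ≤ w.length →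
      ((f w).filter fun t => t.2.2 == o).length ≤ K)
    (x v : DataWord A D) :
    (rightFac f x v).length ≤ 2 * (K * x.length) + 1 := by
  set L := (f (x ++ v)).map (fun t : G × D × ℕ =>
    if x.length < t.2.2 then FOElem.right else FOElem.tri t.1 t.2.1 (t.2.2 : ℤ)) with hL
  have hRF : rightFac f x v = collapse L := rfl
  have htri : (rightFac f x v).countP (fun e => e.isTri) ≤ K * x.length := by
    calc (rightFac f x v).countP (fun e => e.isTri)
        ≤ L.countP (fun e => e.isTri) := by
          rw [hRF]; exact (collapse_sublist L).countP_le
      _ = (f (x ++ v)).countP (fun t => t.2.2 ≤ x.length) := by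
          rw [hL, List.countP_map]
          refine List.countP_congr fun t ht => ?_
          simp only [Function.comp_apply]
          by_cases h : x.length < t.2.2
          · simp only [if_pos h, FOElem.isTri]
            simp only [decide_eq_true_eq]
            constructor
            · intro hh; exact absurd hh (by simp)
            · intro hh; omega
          · simp only [if_neg h, FOElem.isTri]
            simp only [decide_eq_true_eq]
            constructor
            · intro _; omega
            · intro _; trivial
      _ ≤ K * x.length := countP_origin_le hpeek hK x v
  have hmk : (rightFac f x v).countP (fun e => !e.isTri)
      ≤ (rightFac f x v).countP (fun e => e.isTri) + 1 :=
    marks_le_tris (rightFac f x v).length _ le_rfl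
      (fun e he => rightFac_elem_cases he) (by rw [hRF]; exact collapse_chain' L)
  have hlen : (rightFac f x v).length = (rightFac f x v).countP (fun e => e.isTri)
      + (rightFac f x v).countP (fun e => !e.isTri) := by
    rw [List.length_eq_countP_add_countP (fun e : FOElem G D => e.isTri)]
    congr 1
    refine List.countP_congr fun e _ => ?_
    simp
  omega

lemma rightFac_range_finite (hpeek : NoDataPeeking f) (hblow : LinearBlowUp f)
    (x : DataWord A D) [Fintype G] : (Set.range fun v => rightFac f x v).Finite := by
  classical
  obtain ⟨K, hK⟩ := hblow
  set Ax : Set (FOElem G D) := {e | e = FOElem.right ∨ ∃ (g : G) (d : D) (o : ℕ),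
    e = FOElem.tri g d (o : ℤ) ∧ d ∈ x.map Prod.snd ∧ 1 ≤ o ∧ o ≤ x.length} with hAx
  have hAfin : Ax.Finite := by
    have himg : Ax ⊆ insert FOElem.right
        ((fun gdo : G × D × ℕ => FOElem.tri gdo.1 gdo.2.1 (gdo.2.2 : ℤ)) ''
          (Set.univ ×ˢ ({d | d ∈ x.map Prod.snd} ×ˢ {o | o ≤ x.length}))) := by
      rintro e (rfl | ⟨g, d, o, rfl, hd, h1, h2⟩)
      · exact Set.mem_insert _ _
      · exact Set.mem_insert_of_mem _ ⟨(g, d, o), ⟨Set.mem_univ g, hd, h2⟩, rfl⟩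
    refine Set.Finite.subset (Set.Finite.insert _ (Set.Finite.image _ ?_)) himg
    exact Set.finite_univ.prod ((x.map Prod.snd).finite_toSet.prod (Set.finite_Iic x.length))
  haveI := hAfin.to_subtype
  have hlists := List.finite_length_le (↥Ax) (2 * (K * x.length) + 1)
  have hsub2 : (Set.range fun v => rightFac f x v) ⊆
      (List.map (Subtype.val : ↥Ax → FOElem G D)) ''
        {l : List ↥Ax | l.length ≤ 2 * (K * x.length) + 1} := by
    rintro _ ⟨v, rfl⟩
    have hmem : ∀ e ∈ rightFac f x v, e ∈ Ax := by
      intro e he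
      rw [hAx]
      exact rightFac_mem hpeek he
    refine ⟨(rightFac f x v).attach.map (fun e => (⟨e.1, hmem e.1 e.2⟩ : ↥Ax)), ?_, ?_⟩
    · simp only [Set.mem_setOf_eq, List.length_map, List.length_attach]
      exact rightFac_length_le hpeek hK x v
    · rw [List.map_map]
      simp
  exact (hlists.image _).subset hsub2

lemma get_map_aux {α β : Type*} (g : α → β) (l : List α) (k : Fin (l.map g).length) :
    (l.map g).get k = g (l.get ⟨k.1, by simpa using k.2⟩) := by simp

end Finiteness

end SSRT

open SSRT

/-- Lemma 11: if `≡_f` has finite index then so does `≡_f^E`. -/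
theorem rEquiv_finite_index
    {D A G : Type} [DecidableEq D] [Infinite D] [DecidableEq G]
    [Fintype A] [Fintype G]
    (f : Transduction A G D)
    (hperm : PermInvariant f) (hpeek : NoDataPeeking f)
    (hblow : LinearBlowUp f) (hfin : FEquivFiniteIndex f)
    (E : DataWord A D → Equiv.Perm D) (hE : IsEqualizingScheme f E) :
    REquivFiniteIndex f E := by
  classical
  obtain ⟨δ, hδ⟩ := hE
  obtain ⟨S, hSfin, hSrep⟩ := hfin
  set w : DataWord A D → DataWord A D := fun u => permW (E u) u with hw
  have H : ∀ u : DataWord A D, ∃ rr : DataWord A D, rr ∈ S ∧ FEquiv f rr (w u) := by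
    intro u
    obtain ⟨rr, h1, h2⟩ := hSrep (w u)
    exact ⟨rr, h1, h2⟩
  choose r hrS hrF using H
  have H2 : ∀ u, ∃ p : Equiv.Perm D,
      (∀ al, IsAiflSeq f (permW p (w u)) al ↔ IsAiflSeq f (r u) al) ∧
      (∀ uu v1 v2, (rightFac f ((r u) ++ uu) v1 = rightFac f ((r u) ++ uu) v2) ↔
        (rightFac f (permW p (w u) ++ uu) v1 = rightFac f (permW p (w u) ++ uu) v2)) := by
    intro u
    obtain ⟨p, _, h2, h3⟩ := hrF u
    exact ⟨p, h2, h3⟩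
  choose π hπ2 hπ3 using H2
  have H3 : ∀ u, ∃ al, IsAiflSeq f (w u) al := fun u => exists_isAiflSeq hperm hpeek (w u)
  choose al hal using H3
  set L : DataWord A D → List D := fun u => (al u).map Prod.fst with hLdef
  have hLifl : ∀ u, IsIflSeq f (w u) (L u) := fun u => (hal u).1
  have hLget : ∀ u (i : ℕ) (h : i < (L u).length), (L u).get ⟨i, h⟩ = δ (i + 1) :=
    fun u => hδ u (L u) (hLifl u)
  have hIflr : ∀ u, IsIflSeq f (r u) ((L u).map (π u)) := by
    intro u
    have h0 := ((hπ2 u _).mp (isAiflSeq_perm hperm (π u) (hal u))).1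
    have heq : ((al u).map fun p => (π u p.1, p.2)).map Prod.fst = (L u).map (π u) := by
      rw [hLdef, List.map_map, List.map_map]
      rfl
    rwa [heq] at h0
  have key : ∀ u v1 v2, (rightFac f (w u) v1 = rightFac f (w u) v2) ↔
      (rightFac f (r u) (permW (π u) v1) = rightFac f (r u) (permW (π u) v2)) := by
    intro u v1 v2
    have h3 := hπ3 u [] (permW (π u) v1) (permW (π u) v2)
    rw [List.append_nil, List.append_nil] at h3
    rw [h3, rightFac_perm hperm (π u) (w u) v1, rightFac_perm hperm (π u) (w u) v2,
      permFO_inj]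
  have hB : ∀ u u', r u = r u' → ∀ v1 v2,
      ((rightFac f (w u) v1 = rightFac f (w u) v2) ↔
       (rightFac f (w u') v1 = rightFac f (w u') v2)) := by
    intro u u' hru v1 v2
    have h1 : IsIflSeq f (r u) ((L u).map (π u)) := hIflr u
    have h2 : IsIflSeq f (r u) ((L u').map (π u')) := by
      rw [hru]; exact hIflr u'
    have heqL : (L u).map (π u) = (L u').map (π u') := isIflSeq_unique h1 h2
    set σ : Equiv.Perm D := π u' * (π u)⁻¹ with hσ
    have hfixσ : ∀ e, Vulnerable f e (r u) → σ e = e := by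
      intro e he
      have hmem : e ∈ (L u).map (π u) := (h1.1 e).mpr (Or.inr he)
      obtain ⟨n, hn⟩ := List.mem_iff_get.mp hmem
      have hn1 : (L u).get ⟨n.1, by simpa using n.2⟩ = δ (n.1 + 1) := hLget u n.1 _
      have hval : e = π u (δ (n.1 + 1)) := by
        rw [← hn, get_map_aux, hn1]
      have h5 := List.get_of_eq heqL n
      have hval2 : e = π u' (δ (n.1 + 1)) := by
        rw [← hn, h5, get_map_aux]
        congr 1
        exact hLget u' n.1 _
      rw [hσ]
      have : (π u)⁻¹ e = δ (n.1 + 1) := by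
        rw [hval]
        exact (π u).symm_apply_apply _
      rw [Equiv.Perm.mul_apply, this, ← hval2]
    have hAv : ∀ x, rightFac f (r u) (permW σ x) = rightFac f (r u) x :=
      fun x => fix_vuln hperm hpeek hfixσ x
    have hcomp : ∀ x : DataWord A D, permW σ (permW (π u) x) = permW (π u') x := by
      intro x
      rw [permW_permW, hσ, inv_mul_cancel_right]
    calc (rightFac f (w u) v1 = rightFac f (w u) v2)
        ↔ (rightFac f (r u) (permW (π u) v1) = rightFac f (r u) (permW (π u) v2)) :=
          key u v1 v2
      _ ↔ (rightFac f (r u) (permW (π u') v1) = rightFac f (r u) (permW (π u') v2)) := by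
          rw [← hcomp v1, ← hcomp v2, hAv (permW (π u) v1), hAv (permW (π u) v2)]
      _ ↔ (rightFac f (r u') (permW (π u') v1) = rightFac f (r u') (permW (π u') v2)) := by
          rw [hru]
      _ ↔ _ := (key u' v1 v2).symm
  have hrange : (Set.range r).Finite := hSfin.subset (by rintro x ⟨u, rfl⟩; exact hrS u)
  haveI := hrange.to_subtype
  have hx : ∀ x : ↥(Set.range r), ∃ u, r u = (x : DataWord A D) := fun x => x.2
  choose uOf huOf using hx
  set Φ : DataWord A D → (↥(Set.range r) → List (FOElem G D)) :=
    fun v x => rightFac f (w (uOf x)) v with hΦ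
  have hC : ∀ v1 v2, Φ v1 = Φ v2 → REquiv f E v1 v2 := by
    intro v1 v2 h u
    show rightFac f (w u) v1 = rightFac f (w u) v2
    have hmem : r u ∈ Set.range r := Set.mem_range_self u
    exact (hB (uOf ⟨r u, hmem⟩) u (huOf ⟨r u, hmem⟩) v1 v2).mp (congrFun h ⟨r u, hmem⟩)
  have hΦfin : (Set.range Φ).Finite := by
    have hsub : Set.range Φ ⊆ Set.univ.pi (fun x : ↥(Set.range r) =>
        Set.range (fun v => rightFac f (w (uOf x)) v)) := by
      rintro _ ⟨v, rfl⟩ x _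
      exact ⟨v, rfl⟩
    exact (Set.Finite.pi (fun x => rightFac_range_finite hpeek hblow (w (uOf x)))).subset hsub
  haveI := hΦfin.to_subtype
  have hy : ∀ y : ↥(Set.range Φ), ∃ v, Φ v = (y : _) := fun y => y.2
  choose g hg using hy
  refine ⟨Set.range g, Set.finite_range g, ?_⟩
  intro v
  refine ⟨g ⟨Φ v, Set.mem_range_self v⟩, Set.mem_range_self _, ?_⟩
  exact hC _ v (hg ⟨Φ v, Set.mem_range_self v⟩)
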